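/- Let p ≥ 2, q = p/(p−1), δ > 0 and Q = Q_{p,δ}. Then Q is real Fréchet differentiable on all of ℂ², and for every (ζ,η) ∈ ℂ² with η ≠ 0 and every (u,v) ∈ ℂ² one has DQ(ζ,η)(u,v) = Re(ζ̄u)·(p|ζ|^{p−2} + 2δ·m₁(ζ,η)) + Re(η̄v)·(q|η|^{q−2} + (2−q)δ·m₂(ζ,η)), where m₁(ζ,η) = |η|^{2−q} if |ζ|^p ≤ |η|^q and m₁(ζ,η) = |ζ|^{p−2} otherwise, and m₂(ζ,η) = |ζ|²|η|^{−q} if |ζ|^p ≤ |η|^q and m₂(ζ,η) = |η|^{q−2} otherwise (terms of the form Re(ζ̄u)·|ζ|^{p−2} are interpreted as 0 when ζ = 0). -/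

import Mathlib

/-- The Nazarov–Treil Bellman function `Q_{p,δ}`. -/
noncomputable def bellmanQ (p q δ : ℝ) (ζ η : ℂ) : ℝ :=
  ‖ζ‖ ^ p + ‖η‖ ^ q + δ *
    (if ‖ζ‖ ^ p ≤ ‖η‖ ^ q then ‖ζ‖ ^ 2 * ‖η‖ ^ (2 - q)
      else (2 / p) * ‖ζ‖ ^ p + (2 / q - 1) * ‖η‖ ^ q)

open Complex Real Asymptotics ContinuousLinearMap Filter Topology

private lemma keyC {z : ℂ} (r : ℝ) (h : z ≠ 0 ∨ 1 < r) :
    HasFDerivAt (fun z : ℂ => ‖z‖ ^ r) ((r * ‖z‖ ^ (r - 2)) • innerSL ℝ z) z := by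
  rcases h with hz | hr
  · have hns : (‖z‖ ^ 2 : ℝ) ≠ 0 := by
      have := norm_pos_iff.2 hz; positivity
    have h := ((hasStrictFDerivAt_norm_sq z).hasFDerivAt.rpow_const (p := r/2) (Or.inl hns))
    have hfun : (fun z : ℂ => (‖z‖ ^ 2 : ℝ) ^ (r/2)) = fun z : ℂ => ‖z‖ ^ r := by
      funext w
      rw [← Real.rpow_natCast ‖w‖ 2, ← Real.rpow_mul (norm_nonneg w)]
      norm_num
      rw [show (2:ℝ) * (r/2) = r by ring]
    have hder : ((r/2) * (‖z‖ ^ 2 : ℝ) ^ (r/2 - 1)) • (2 • innerSL ℝ z)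
        = (r * ‖z‖ ^ (r - 2)) • innerSL ℝ z := by
      rw [← Nat.cast_smul_eq_nsmul ℝ 2 (innerSL ℝ z), smul_smul]
      congr 1
      rw [← Real.rpow_natCast ‖z‖ 2, ← Real.rpow_mul (norm_nonneg z)]
      push_cast
      rw [show (2:ℝ) * (r/2 - 1) = r - 2 by ring]
      ring
    rw [← hfun, ← hder]
    exact h
  · exact hasFDerivAt_norm_rpow z hr

private lemma glueD {E : Type*} [NormedAddCommGroup E] [NormedSpace ℝ E] {f g Q : E → ℝ}
    {L : E →L[ℝ] ℝ} {x₀ : E} (hf : HasFDerivAt f L x₀) (hg : HasFDerivAt g L x₀)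
    (hfg : f x₀ = g x₀) (hQ : ∀ w, Q w = f w ∨ Q w = g w) (hQ0 : Q x₀ = f x₀) :
    HasFDerivAt Q L x₀ := by
  rw [hasFDerivAt_iff_isLittleO_nhds_zero, isLittleO_iff]
  intro ε hε
  have h1 := isLittleO_iff.1 (hasFDerivAt_iff_isLittleO_nhds_zero.1 hf) hε
  have h2 := isLittleO_iff.1 (hasFDerivAt_iff_isLittleO_nhds_zero.1 hg) hε
  filter_upwards [h1, h2] with w hw1 hw2
  rcases hQ (x₀ + w) with h | h
  · rw [h, hQ0]; exact hw1
  · rw [h, hQ0, hfg]; exact hw2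

/-- The derivative of the first branch. -/
noncomputable def bellL1 (p q δ : ℝ) (w : ℂ × ℂ) : ℂ × ℂ →L[ℝ] ℝ :=
  (p * ‖w.1‖ ^ (p - 2) + 2 * δ * ‖w.2‖ ^ (2 - q)) •
      ((innerSL ℝ w.1).comp (fst ℝ ℂ ℂ)) +
    (q * ‖w.2‖ ^ (q - 2) + (2 - q) * δ * (‖w.1‖ ^ 2 * ‖w.2‖ ^ (-q))) •
      ((innerSL ℝ w.2).comp (snd ℝ ℂ ℂ))

/-- The derivative of the second branch. -/
noncomputable def bellL2 (p q δ : ℝ) (w : ℂ × ℂ) : ℂ × ℂ →L[ℝ] ℝ :=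
  (p * ‖w.1‖ ^ (p - 2) + 2 * δ * ‖w.1‖ ^ (p - 2)) •
      ((innerSL ℝ w.1).comp (fst ℝ ℂ ℂ)) +
    (q * ‖w.2‖ ^ (q - 2) + (2 - q) * δ * ‖w.2‖ ^ (q - 2)) •
      ((innerSL ℝ w.2).comp (snd ℝ ℂ ℂ))

private lemma hasFDerivAt_f1 (p q δ : ℝ) (hp1 : 1 < p) (hq1 : 1 < q) {w : ℂ × ℂ} (hw : w.2 ≠ 0) :
    HasFDerivAt (fun w : ℂ × ℂ => ‖w.1‖ ^ p + ‖w.2‖ ^ q + δ * (‖w.1‖ ^ 2 * ‖w.2‖ ^ (2 - q)))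
      (bellL1 p q δ w) w := by
  have hA : HasFDerivAt (fun w : ℂ × ℂ => ‖w.1‖ ^ p)
      (((p * ‖w.1‖ ^ (p - 2)) • innerSL ℝ w.1).comp (fst ℝ ℂ ℂ)) w :=
    (keyC p (Or.inr hp1)).comp w hasFDerivAt_fst
  have hB : HasFDerivAt (fun w : ℂ × ℂ => ‖w.2‖ ^ q)
      (((q * ‖w.2‖ ^ (q - 2)) • innerSL ℝ w.2).comp (snd ℝ ℂ ℂ)) w :=
    (keyC q (Or.inr hq1)).comp w hasFDerivAt_snd
  have hC : HasFDerivAt (fun w : ℂ × ℂ => (‖w.1‖ ^ 2 : ℝ))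
      ((2 • innerSL ℝ w.1).comp (fst ℝ ℂ ℂ)) w :=
    (hasStrictFDerivAt_norm_sq w.1).hasFDerivAt.comp w hasFDerivAt_fst
  have hD : HasFDerivAt (fun w : ℂ × ℂ => ‖w.2‖ ^ (2 - q))
      ((((2 - q) * ‖w.2‖ ^ (2 - q - 2)) • innerSL ℝ w.2).comp (snd ℝ ℂ ℂ)) w :=
    (keyC (2 - q) (Or.inl hw)).comp w hasFDerivAt_snd
  have h := (hA.add hB).add ((hC.mul hD).const_mul δ)
  refine h.congr_fderiv ?_
  refine ContinuousLinearMap.ext fun x => ?_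
  simp only [bellL1, ContinuousLinearMap.add_apply, ContinuousLinearMap.smul_apply,
    ContinuousLinearMap.coe_comp', Function.comp_apply, ContinuousLinearMap.coe_fst',
    ContinuousLinearMap.coe_snd', innerSL_apply_apply, smul_eq_mul, Complex.inner,
    ContinuousLinearMap.coe_smul', Pi.smul_apply]
  rw [show (2 : ℝ) - q - 2 = -q by ring]
  ring

private lemma hasFDerivAt_f2 (p q δ : ℝ) (hp1 : 1 < p) (hq1 : 1 < q) (w : ℂ × ℂ) :
    HasFDerivAt
      (fun w : ℂ × ℂ => ‖w.1‖ ^ p + ‖w.2‖ ^ q + δ * ((2 / p) * ‖w.1‖ ^ p + (2 / q - 1) * ‖w.2‖ ^ q))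
      (bellL2 p q δ w) w := by
  have hA : HasFDerivAt (fun w : ℂ × ℂ => ‖w.1‖ ^ p)
      (((p * ‖w.1‖ ^ (p - 2)) • innerSL ℝ w.1).comp (fst ℝ ℂ ℂ)) w :=
    (keyC p (Or.inr hp1)).comp w hasFDerivAt_fst
  have hB : HasFDerivAt (fun w : ℂ × ℂ => ‖w.2‖ ^ q)
      (((q * ‖w.2‖ ^ (q - 2)) • innerSL ℝ w.2).comp (snd ℝ ℂ ℂ)) w :=
    (keyC q (Or.inr hq1)).comp w hasFDerivAt_snd
  have h := (hA.add hB).add (((hA.const_mul (2 / p)).add (hB.const_mul (2 / q - 1))).const_mul δ)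
  refine h.congr_fderiv ?_
  have hp0 : p ≠ 0 := by positivity
  have hq0 : q ≠ 0 := by positivity
  refine ContinuousLinearMap.ext fun x => ?_
  simp only [bellL2, ContinuousLinearMap.add_apply, ContinuousLinearMap.smul_apply,
    ContinuousLinearMap.coe_comp', Function.comp_apply, ContinuousLinearMap.coe_fst',
    ContinuousLinearMap.coe_snd', innerSL_apply_apply, smul_eq_mul,
    ContinuousLinearMap.coe_smul', Pi.smul_apply]
  field_simp
  ring

/-- `Q = Q_{p,δ}` is real Fréchet differentiable on all of `ℂ²`, and for `η ≠ 0` its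
derivative is given by the explicit Wirtinger-type formula. -/
theorem bellman_derivative_formula
    (p q δ : ℝ) (hp : 2 ≤ p) (hq : q = p / (p - 1)) (hδ : 0 < δ) :
    (∀ w : ℂ × ℂ, DifferentiableAt ℝ (fun w : ℂ × ℂ => bellmanQ p q δ w.1 w.2) w) ∧
    ∀ ζ η : ℂ, η ≠ 0 → ∃ L : ℂ × ℂ →L[ℝ] ℝ,
      HasFDerivAt (fun w : ℂ × ℂ => bellmanQ p q δ w.1 w.2) L (ζ, η) ∧
      ∀ u v : ℂ, L (u, v) =
        ((starRingEnd ℂ) ζ * u).re *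
          (p * ‖ζ‖ ^ (p - 2) + 2 * δ *
            (if ‖ζ‖ ^ p ≤ ‖η‖ ^ q then ‖η‖ ^ (2 - q) else ‖ζ‖ ^ (p - 2))) +
        ((starRingEnd ℂ) η * v).re *
          (q * ‖η‖ ^ (q - 2) + (2 - q) * δ *
            (if ‖ζ‖ ^ p ≤ ‖η‖ ^ q then ‖ζ‖ ^ 2 * ‖η‖ ^ (-q) else ‖η‖ ^ (q - 2))) := by
  have hp1 : 1 < p := lt_of_lt_of_le one_lt_two hp
  have hp0 : 0 < p := by linarith
  have hpm1 : 0 < p - 1 := by linarith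
  have hq1 : 1 < q := by rw [hq, lt_div_iff₀ hpm1]; linarith
  have hq2 : q ≤ 2 := by rw [hq, div_le_iff₀ hpm1]; linarith
  have hq0 : 0 < q := by linarith
  set Q : ℂ × ℂ → ℝ := fun w => bellmanQ p q δ w.1 w.2 with hQdef
  set f1 : ℂ × ℂ → ℝ :=
    fun w => ‖w.1‖ ^ p + ‖w.2‖ ^ q + δ * (‖w.1‖ ^ 2 * ‖w.2‖ ^ (2 - q)) with hf1
  set f2 : ℂ × ℂ → ℝ :=
    fun w => ‖w.1‖ ^ p + ‖w.2‖ ^ q + δ * ((2 / p) * ‖w.1‖ ^ p + (2 / q - 1) * ‖w.2‖ ^ q) with hf2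
  have hQ1 : ∀ w : ℂ × ℂ, ‖w.1‖ ^ p ≤ ‖w.2‖ ^ q → Q w = f1 w := by
    intro w h; simp only [hQdef, bellmanQ, if_pos h, hf1]
  have hQ2 : ∀ w : ℂ × ℂ, ¬ (‖w.1‖ ^ p ≤ ‖w.2‖ ^ q) → Q w = f2 w := by
    intro w h; simp only [hQdef, bellmanQ, if_neg h, hf2]
  have hQsplit : ∀ w, Q w = f1 w ∨ Q w = f2 w := by
    intro w
    by_cases h : ‖w.1‖ ^ p ≤ ‖w.2‖ ^ q
    · exact Or.inl (hQ1 w h)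
    · exact Or.inr (hQ2 w h)
  have hcont1 : Continuous fun w : ℂ × ℂ => ‖w.1‖ ^ p :=
    continuous_fst.norm.rpow_const fun _ => Or.inr hp0.le
  have hcont2 : Continuous fun w : ℂ × ℂ => ‖w.2‖ ^ q :=
    continuous_snd.norm.rpow_const fun _ => Or.inr hq0.le
  -- case 1 : strict inequality, first branch
  have case1 : ∀ w : ℂ × ℂ, ‖w.1‖ ^ p < ‖w.2‖ ^ q → HasFDerivAt Q (bellL1 p q δ w) w := by
    intro w hlt
    have hw2 : w.2 ≠ 0 := by
      intro h0
      have hnn := Real.rpow_nonneg (norm_nonneg w.1) p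
      rw [h0, norm_zero, Real.zero_rpow hq0.ne'] at hlt
      linarith
    refine (hasFDerivAt_f1 p q δ hp1 hq1 hw2).congr_of_eventuallyEq ?_
    have hev : ∀ᶠ x in 𝓝 w, ‖x.1‖ ^ p < ‖x.2‖ ^ q :=
      (isOpen_lt hcont1 hcont2).eventually_mem hlt
    filter_upwards [hev] with x hx
    exact hQ1 x hx.le
  -- case 2 : strict inequality, second branch
  have case2 : ∀ w : ℂ × ℂ, ‖w.2‖ ^ q < ‖w.1‖ ^ p → HasFDerivAt Q (bellL2 p q δ w) w := by
    intro w hlt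
    refine (hasFDerivAt_f2 p q δ hp1 hq1 w).congr_of_eventuallyEq ?_
    have hev : ∀ᶠ x in 𝓝 w, ‖x.2‖ ^ q < ‖x.1‖ ^ p :=
      (isOpen_lt hcont2 hcont1).eventually_mem hlt
    filter_upwards [hev] with x hx
    exact hQ2 x (not_le.2 hx)
  -- boundary case with nonzero second coordinate
  have case3 : ∀ w : ℂ × ℂ, ‖w.1‖ ^ p = ‖w.2‖ ^ q → w.2 ≠ 0 →
      HasFDerivAt Q (bellL1 p q δ w) w := by
    intro w heq hw2
    have ht : 0 < ‖w.2‖ := norm_pos_iff.2 hw2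
    have hw1 : w.1 ≠ 0 := by
      intro h0
      have := Real.rpow_pos_of_pos ht q
      rw [h0, norm_zero, Real.zero_rpow hp0.ne'] at heq
      linarith
    have hs : 0 < ‖w.1‖ := norm_pos_iff.2 hw1
    have hηs : ‖w.2‖ = ‖w.1‖ ^ (p / q) := by
      have h1 : (‖w.2‖ ^ q) ^ (1/q) = ‖w.2‖ := by
        rw [← Real.rpow_mul ht.le, mul_one_div, div_self hq0.ne', Real.rpow_one]
      have h2 : (‖w.1‖ ^ p) ^ (1/q) = ‖w.1‖ ^ (p/q) := by
        rw [← Real.rpow_mul hs.le, mul_one_div]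
      rw [← h1, ← heq, h2]
    have e1 : p / q * (2 - q) = p - 2 := by rw [hq]; field_simp; ring
    have e2 : p / q * (q - 2) = 2 - p := by rw [hq]; field_simp; ring
    have hsq : (‖w.1‖ ^ 2 : ℝ) = ‖w.1‖ ^ (2:ℝ) := by
      rw [← Real.rpow_natCast ‖w.1‖ 2]; norm_num
    have id1 : ‖w.2‖ ^ (2 - q) = ‖w.1‖ ^ (p - 2) := by
      rw [hηs, ← Real.rpow_mul hs.le, e1]
    have id2 : ‖w.1‖ ^ 2 * ‖w.2‖ ^ (-q) = ‖w.2‖ ^ (q - 2) := by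
      rw [hsq, hηs, ← Real.rpow_mul hs.le, ← Real.rpow_mul hs.le, ← Real.rpow_add hs, e2]
      congr 1
      have hpq' : p / q * -q = -p := by field_simp
      rw [hpq']; ring
    have hL : ‖w.1‖ ^ 2 * ‖w.1‖ ^ (p - 2 : ℝ) = ‖w.1‖ ^ p := by
      rw [hsq, ← Real.rpow_add hs]; norm_num
    have hsum : 2/p + (2/q - 1) = 1 := by rw [hq]; field_simp; ring
    have hf1f2 : f1 w = f2 w := by
      simp only [hf1, hf2]
      have hbr : ‖w.1‖ ^ 2 * ‖w.2‖ ^ (2 - q) = 2/p * ‖w.1‖ ^ p + (2/q - 1) * ‖w.2‖ ^ q := by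
        rw [id1, hL, ← heq,
          show (2/p:ℝ) * ‖w.1‖^p + (2/q - 1) * ‖w.1‖^p = (2/p + (2/q - 1)) * ‖w.1‖^p by ring,
          hsum, one_mul]
      rw [hbr]
    have hL12 : bellL2 p q δ w = bellL1 p q δ w := by
      unfold bellL1 bellL2
      rw [← id1, id2]
    refine glueD (hasFDerivAt_f1 p q δ hp1 hq1 hw2)
      (hL12 ▸ hasFDerivAt_f2 p q δ hp1 hq1 w) hf1f2 hQsplit (hQ1 w heq.le)
  -- origin case
  have case0 : HasFDerivAt Q (0 : ℂ × ℂ →L[ℝ] ℝ) ((0:ℂ), (0:ℂ)) := by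
    have hL20 : bellL2 p q δ ((0:ℂ), (0:ℂ)) = 0 := by
      refine ContinuousLinearMap.ext fun x => ?_
      simp [bellL2]
    have hf20 : HasFDerivAt f2 (0 : ℂ × ℂ →L[ℝ] ℝ) ((0:ℂ), (0:ℂ)) :=
      hL20 ▸ hasFDerivAt_f2 p q δ hp1 hq1 _
    have hQ00 : Q ((0:ℂ), (0:ℂ)) = 0 := by
      simp [hQdef, bellmanQ, Real.zero_rpow hp0.ne', Real.zero_rpow hq0.ne']
    have hf200 : f2 ((0:ℂ), (0:ℂ)) = 0 := by
      simp [hf2, Real.zero_rpow hp0.ne', Real.zero_rpow hq0.ne']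
    have hkey : ∀ w : ℂ × ℂ, 0 ≤ Q w ∧ Q w ≤ f2 w := by
      intro w
      have ha : (0:ℝ) ≤ ‖w.1‖ ^ p := Real.rpow_nonneg (norm_nonneg _) _
      have hb : (0:ℝ) ≤ ‖w.2‖ ^ q := Real.rpow_nonneg (norm_nonneg _) _
      have hw1' : (0:ℝ) ≤ 2/p := by positivity
      have hw2' : (0:ℝ) ≤ 2/q - 1 := by
        rw [sub_nonneg, le_div_iff₀ hq0]; linarith
      have hsum : 2/p + (2/q - 1) = 1 := by rw [hq]; field_simp; ring
      have hgm : ‖w.1‖ ^ 2 * ‖w.2‖ ^ (2 - q)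
          = (‖w.1‖ ^ p) ^ (2/p) * (‖w.2‖ ^ q) ^ (2/q - 1) := by
        rw [← Real.rpow_mul (norm_nonneg w.1), ← Real.rpow_mul (norm_nonneg w.2),
          show p * (2/p) = 2 by field_simp, show q * (2/q - 1) = 2 - q by field_simp,
          show (2:ℝ) = ((2:ℕ):ℝ) by norm_num, Real.rpow_natCast]
      have hamgm : (‖w.1‖ ^ p) ^ (2/p) * (‖w.2‖ ^ q) ^ (2/q - 1)
          ≤ 2/p * ‖w.1‖ ^ p + (2/q - 1) * ‖w.2‖ ^ q :=
        Real.geom_mean_le_arith_mean2_weighted hw1' hw2' ha hb hsum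
      rcases hQsplit w with h | h
      · constructor
        · rw [h, hf1]
          have : (0:ℝ) ≤ ‖w.1‖ ^ 2 * ‖w.2‖ ^ (2 - q) := by positivity
          positivity
        · rw [h, hf1, hf2]
          have := mul_le_mul_of_nonneg_left (hgm ▸ hamgm) hδ.le
          linarith
      · constructor
        · rw [h, hf2]
          have h1 : (0:ℝ) ≤ 2/p * ‖w.1‖ ^ p := by positivity
          have h2 : (0:ℝ) ≤ (2/q - 1) * ‖w.2‖ ^ q := mul_nonneg hw2' hb
          positivity
        · rw [h]
    rw [hasFDerivAt_iff_isLittleO_nhds_zero, isLittleO_iff]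
    intro ε hε
    have h2 := isLittleO_iff.1 (hasFDerivAt_iff_isLittleO_nhds_zero.1 hf20) hε
    filter_upwards [h2] with x hx
    have h1 := hkey (((0:ℂ), (0:ℂ)) + x)
    rw [hQ00, hf200] at *
    simp only [ContinuousLinearMap.zero_apply, sub_zero] at hx ⊢
    rw [Real.norm_eq_abs, _root_.abs_of_nonneg h1.1]
    calc Q (((0:ℂ), (0:ℂ)) + x) ≤ f2 (((0:ℂ), (0:ℂ)) + x) := h1.2
      _ ≤ ‖f2 (((0:ℂ), (0:ℂ)) + x)‖ := le_abs_self _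
      _ ≤ ε * ‖x‖ := hx
  constructor
  · intro w
    rcases lt_trichotomy (‖w.1‖ ^ p) (‖w.2‖ ^ q) with h | h | h
    · exact (case1 w h).differentiableAt
    · by_cases hw2 : w.2 = 0
      · have hw1 : w.1 = 0 := by
          rw [hw2, norm_zero, Real.zero_rpow hq0.ne'] at h
          by_contra hne
          have hpos : 0 < ‖w.1‖ := norm_pos_iff.2 hne
          have := Real.rpow_pos_of_pos hpos p
          linarith
        have hw : w = ((0:ℂ), (0:ℂ)) := Prod.ext hw1 hw2
        rw [hw]
        exact case0.differentiableAt
      · exact (case3 w h hw2).differentiableAt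
    · exact (case2 w h).differentiableAt
  · intro ζ η hη
    rcases lt_trichotomy (‖ζ‖ ^ p) (‖η‖ ^ q) with h | h | h
    · refine ⟨bellL1 p q δ (ζ, η), case1 (ζ, η) h, fun u v => ?_⟩
      rw [if_pos h.le, if_pos h.le]
      simp only [bellL1, ContinuousLinearMap.add_apply, ContinuousLinearMap.smul_apply,
        ContinuousLinearMap.coe_comp', Function.comp_apply, ContinuousLinearMap.coe_fst',
        ContinuousLinearMap.coe_snd', innerSL_apply_apply, smul_eq_mul, Complex.inner, Complex.mul_re]
      ring
    · refine ⟨bellL1 p q δ (ζ, η), case3 (ζ, η) h hη, fun u v => ?_⟩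
      rw [if_pos h.le, if_pos h.le]
      simp only [bellL1, ContinuousLinearMap.add_apply, ContinuousLinearMap.smul_apply,
        ContinuousLinearMap.coe_comp', Function.comp_apply, ContinuousLinearMap.coe_fst',
        ContinuousLinearMap.coe_snd', innerSL_apply_apply, smul_eq_mul, Complex.inner, Complex.mul_re]
      ring
    · refine ⟨bellL2 p q δ (ζ, η), case2 (ζ, η) h, fun u v => ?_⟩
      rw [if_neg (not_le.2 h), if_neg (not_le.2 h)]
      simp only [bellL2, ContinuousLinearMap.add_apply, ContinuousLinearMap.smul_apply,
        ContinuousLinearMap.coe_comp', Function.comp_apply, ContinuousLinearMap.coe_fst',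
        ContinuousLinearMap.coe_snd', innerSL_apply_apply, smul_eq_mul, Complex.inner, Complex.mul_re]
      ring
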